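/- Let F_q be a finite field and let n be a positive integer such that rad(n) divides q² − 1. Then every monic irreducible factor f of x^n − 1 in F_q[x] is either a binomial, f = x^t − a for some positive integer t and a ∈ F_q^*, or a trinomial of the form f = x^{2t} − (a + a^q)·x^t + a^{q+1} for some positive integer t and some a ∈ F_{q²} \ F_q. -/
import Mathlib


open Polynomial

private lemma geom_sum_nat (Q : ℕ) (hQ : 1 ≤ Q) (e : ℕ) :
    (Q - 1) * (∑ i ∈ Finset.range e, Q ^ i) = Q ^ e - 1 := by
  induction e with
  | zero => simp
  | succ e ih =>
    rw [Finset.sum_range_succ, Nat.mul_add, ih, pow_succ]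
    have h1 : 1 ≤ Q ^ e := Nat.one_le_pow _ _ hQ
    have h3 : (Q - 1) * Q ^ e = Q ^ e * Q - Q ^ e := by
      rw [Nat.sub_mul, one_mul, mul_comm Q]
    have h4 : Q ^ e ≤ Q ^ e * Q := Nat.le_mul_of_pos_right _ (by omega)
    omega

private lemma nt_le {Q m e : ℕ} (hQ : 2 ≤ Q) (hm : 0 < m) (he : 0 < e)
    (hrad : ∀ p : ℕ, p.Prime → p ∣ m → p ∣ Q - 1)
    (hpar : Odd m ∨ 4 ∣ Q - 1)
    (hdvd : m ∣ Q ^ e - 1) :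
    m / Nat.gcd m (Q - 1) ≤ e := by
  have hQ1 : Q - 1 ≠ 0 := by omega
  set s := Nat.gcd m (Q - 1) with hs
  have hsm : s ∣ m := Nat.gcd_dvd_left _ _
  have hsq : s ∣ Q - 1 := Nat.gcd_dvd_right _ _
  have hs0 : s ≠ 0 := (Nat.gcd_pos_of_pos_left _ hm).ne'
  set t := m / s with ht
  have ht0 : t ≠ 0 := (Nat.div_pos (Nat.le_of_dvd hm hsm) (Nat.pos_of_ne_zero hs0)).ne'
  have hts : t * s = m := Nat.div_mul_cancel hsm
  have hQe : Q ^ e - 1 ≠ 0 := by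
    have := Nat.one_lt_pow he.ne' hQ
    omega
  refine Nat.le_of_dvd he ?_
  rw [← Nat.factorization_le_iff_dvd ht0 he.ne', Finsupp.le_def]
  intro p
  by_cases hp0 : t.factorization p = 0
  · simp [hp0]
  have hp : p.Prime := by
    by_contra h
    exact hp0 (Nat.factorization_eq_zero_of_not_prime t h)
  haveI := Fact.mk hp
  have fd : ∀ x : ℕ, x.factorization p = padicValNat p x := fun x => Nat.factorization_def x hp
  have hpt : p ∣ t := Nat.dvd_of_factorization_pos hp0
  have hpm : p ∣ m := hpt.trans (Nat.div_dvd_of_dvd hsm)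
  have hpQ : p ∣ Q - 1 := hrad p hp hpm
  rw [fd] at hp0 ⊢
  rw [fd e]
  have hfac_m : padicValNat p m = padicValNat p t + padicValNat p s := by
    rw [← fd, ← fd, ← fd, ← hts, Nat.factorization_mul ht0 hs0]
    simp
  have hfac_s : padicValNat p s = min (padicValNat p m) (padicValNat p (Q - 1)) := by
    rw [← fd, ← fd, ← fd, hs, Nat.factorization_gcd hm.ne' hQ1]
    simp [Finsupp.inf_apply]
  have hfacm_le : padicValNat p m ≤ padicValNat p (Q ^ e - 1) := by
    rw [← fd, ← fd]
    exact Finsupp.le_def.mp ((Nat.factorization_le_iff_dvd hm.ne' hQe).mpr hdvd) p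
  have hsle1 : padicValNat p s ≤ padicValNat p m := hfac_s ▸ min_le_left _ _
  have hsle2 : padicValNat p s ≤ padicValNat p (Q - 1) := hfac_s ▸ min_le_right _ _
  have hsch : padicValNat p s = padicValNat p m ∨ padicValNat p s = padicValNat p (Q - 1) := by
    rw [hfac_s]
    exact min_choice _ _
  clear hfac_s
  have hpQ' : ¬ p ∣ Q := by
    intro h
    have h2 : p ∣ Q - (Q - 1) := Nat.dvd_sub h hpQ
    rw [Nat.sub_sub_self (by omega)] at h2
    exact hp.one_lt.ne' (Nat.dvd_one.mp h2)
  rcases eq_or_ne p 2 with rfl | hp2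
  · have h4 : 4 ∣ Q - 1 := by
      refine hpar.resolve_left ?_
      rw [Nat.odd_iff]
      obtain ⟨c, hc⟩ := hpm
      omega
    rcases Nat.even_or_odd e with heven | hodd
    · have key := padicValNat.pow_two_sub_pow (x := Q) (y := 1) (by omega)
        (by simpa using hpQ) (by omega) he.ne' heven
      rw [one_pow] at key
      have hQ1v : padicValNat 2 (Q + 1) = 1 := by
        obtain ⟨j, hj⟩ := h4
        have h5 : Q + 1 = 2 * (2 * j + 1) := by omega
        rw [h5, padicValNat.mul (by omega) (by omega), padicValNat.self (by omega),
          padicValNat.eq_zero_of_not_dvd (by omega)]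
      rcases hsch with hch | hch <;> omega
    · -- e odd : padicValNat 2 (Q^e - 1) = padicValNat 2 (Q - 1)
      have hQodd : Q % 2 = 1 := by omega
      have hgs := geom_sum_nat Q (by omega) e
      set S := ∑ i ∈ Finset.range e, Q ^ i with hS
      have hSodd : S % 2 = 1 := by
        have h1 : ∀ i ∈ Finset.range e, Q ^ i % 2 = 1 % 2 := by
          intro i _
          rw [Nat.pow_mod, hQodd, one_pow]
        calc S % 2 = (∑ _i ∈ Finset.range e, 1) % 2 := Finset.sum_nat_mod _ 2 _ ▸ by
              rw [Finset.sum_congr rfl h1, ← Finset.sum_nat_mod]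
        _ = e % 2 := by simp
        _ = 1 := Nat.odd_iff.mp hodd
      have hS0 : S ≠ 0 := by omega
      have hv : padicValNat 2 (Q ^ e - 1) = padicValNat 2 (Q - 1) := by
        rw [← hgs, padicValNat.mul hQ1 hS0,
          padicValNat.eq_zero_of_not_dvd (by omega : ¬ 2 ∣ S)]
        omega
      rcases hsch with hch | hch <;> omega
  · have hp1 : Odd p := hp.odd_of_ne_two hp2
    have key := padicValNat.pow_sub_pow (p := p) hp1 (x := Q) (y := 1) (by omega)
      (by simpa using hpQ) hpQ' he.ne'
    rw [one_pow] at key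
    rcases hsch with hch | hch <;> omega

private lemma mem_range_iff_pow_card {K E : Type*} [Field K] [Fintype K] [Field E] [Fintype E]
    [Algebra K E] (x : E) :
    x ∈ Set.range (algebraMap K E) ↔ x ^ Fintype.card K = x := by
  constructor
  · rintro ⟨y, rfl⟩
    rw [← map_pow, FiniteField.pow_card]
  · intro hx
    classical
    have hc : 1 < Fintype.card K := Fintype.one_lt_card
    have hP : (X ^ Fintype.card K - X : E[X]) ≠ 0 :=
      FiniteField.X_pow_card_sub_X_ne_zero E hc
    have hdeg : (X ^ Fintype.card K - X : E[X]).natDegree = Fintype.card K :=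
      FiniteField.X_pow_card_sub_X_natDegree_eq E hc
    set T := (X ^ Fintype.card K - X : E[X]).roots.toFinset with hT
    have hsub : Finset.univ.image (algebraMap K E) ⊆ T := by
      intro z hz
      simp only [Finset.mem_image] at hz
      obtain ⟨y, -, rfl⟩ := hz
      rw [hT, Multiset.mem_toFinset, mem_roots hP]
      simp [IsRoot, sub_eq_zero, ← map_pow, FiniteField.pow_card]
    have hcardT : T.card ≤ Fintype.card K :=
      le_trans (Multiset.toFinset_card_le _) (le_trans (Polynomial.card_roots' _) hdeg.le)
    have hcardI : (Finset.univ.image (algebraMap K E)).card = Fintype.card K := by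
      rw [Finset.card_image_of_injective _ (algebraMap K E).injective, Finset.card_univ]
    have heq : Finset.univ.image (algebraMap K E) = T :=
      Finset.eq_of_subset_of_card_le hsub (by omega)
    have hxT : x ∈ T := by
      rw [hT, Multiset.mem_toFinset, mem_roots hP]
      simp [IsRoot, sub_eq_zero, hx]
    rw [← heq] at hxT
    simp only [Finset.mem_image] at hxT
    obtain ⟨y, -, hy⟩ := hxT
    exact ⟨y, hy⟩

private lemma eq_of_monic_dvd_irreducible {K : Type*} [Field K] {h f : K[X]}
    (hmh : h.Monic) (hmf : f.Monic) (hirr : Irreducible f) (hdvd : h ∣ f) (hu : ¬ IsUnit h) :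
    h = f := by
  obtain ⟨c, hc⟩ := hdvd
  rcases hirr.isUnit_or_isUnit hc with h1 | h2
  · exact absurd h1 hu
  · obtain ⟨u, rfl⟩ := h2
    exact eq_of_monic_of_associated hmh hmf ⟨u, hc.symm⟩

private lemma lemA {K : Type*} [Field K] [Fintype K] {n : ℕ} (hn : 0 < n)
    (hrad : ∀ p : ℕ, p.Prime → p ∣ n → p ∣ Fintype.card K - 1)
    (hpar : Odd n ∨ 4 ∣ Fintype.card K - 1)
    {g : K[X]} (hmg : g.Monic) (hig : Irreducible g) (hgd : g ∣ X ^ n - 1) :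
    ∃ (t : ℕ) (a : K), 0 < t ∧ a ≠ 0 ∧ g = X ^ t - C a := by
  have hQ2 : 2 ≤ Fintype.card K := Fintype.one_lt_card
  haveI : Fact (Irreducible g) := ⟨hig⟩
  have hg0 : g ≠ 0 := hig.ne_zero
  set E := AdjoinRoot g with hE
  let pb := AdjoinRoot.powerBasis hg0
  haveI : Fintype E := Module.fintypeOfFintype pb.basis
  set α := AdjoinRoot.root g with hα
  have hmin : minpoly K α = g := by
    rw [AdjoinRoot.minpoly_root hg0, hmg.leadingCoeff, inv_one, map_one, mul_one]
  have hgev : (aeval α) g = 0 := by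
    have h := minpoly.aeval K α
    rwa [hmin] at h
  obtain ⟨c, hc⟩ := hgd
  have hαn : α ^ n = 1 := by
    have h2 : (aeval α) (X ^ n - 1 : K[X]) = 0 := by rw [hc, map_mul, hgev, zero_mul]
    simpa [sub_eq_zero] using h2
  have hα0 : α ≠ 0 := by
    intro h
    rw [h, zero_pow hn.ne'] at hαn
    exact zero_ne_one hαn
  set m := orderOf α with hm
  have hmn : m ∣ n := orderOf_dvd_of_pow_eq_one hαn
  have hm0 : 0 < m := by
    rcases Nat.eq_zero_or_pos m with h | h
    · rw [h] at hmn
      omega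
    · exact h
  have hαm : α ^ m = 1 := pow_orderOf_eq_one α
  set s := Nat.gcd m (Fintype.card K - 1) with hs
  have hsm : s ∣ m := Nat.gcd_dvd_left _ _
  have hsq : s ∣ Fintype.card K - 1 := Nat.gcd_dvd_right _ _
  have hs0 : 0 < s := Nat.gcd_pos_of_pos_left _ hm0
  set t := m / s with ht
  have ht0 : 0 < t := Nat.div_pos (Nat.le_of_dvd hm0 hsm) hs0
  have hts : t * s = m := Nat.div_mul_cancel hsm
  have hfix : (α ^ t) ^ Fintype.card K = α ^ t := by
    have h1 : (α ^ t) ^ (Fintype.card K - 1) = 1 := by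
      rw [← pow_mul]
      have h2 : s * ((Fintype.card K - 1) / s) = Fintype.card K - 1 :=
        Nat.mul_div_cancel' hsq
      rw [← h2, ← mul_assoc, hts, pow_mul, hαm, one_pow]
    calc (α ^ t) ^ Fintype.card K = (α ^ t) ^ (Fintype.card K - 1) * α ^ t := by
          rw [← pow_succ]
          congr 1
          omega
    _ = α ^ t := by rw [h1, one_mul]
  obtain ⟨b, hb⟩ := (mem_range_iff_pow_card (α ^ t)).mpr hfix
  have hb0 : b ≠ 0 := by
    intro h
    rw [h, map_zero] at hb
    exact pow_ne_zero t hα0 hb.symm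
  have hev : (aeval α) (X ^ t - C b : K[X]) = 0 := by
    rw [map_sub, map_pow, aeval_X, aeval_C, hb, sub_self]
  have hdvd2 : g ∣ X ^ t - C b := by
    have h := minpoly.dvd K α hev
    rwa [hmin] at h
  have hXtC : (X ^ t - C b : K[X]) ≠ 0 := X_pow_sub_C_ne_zero ht0 b
  have hd : g.natDegree ≤ t :=
    le_trans (natDegree_le_of_dvd hdvd2 hXtC) (natDegree_X_pow_sub_C).le
  have hd0 : 0 < g.natDegree := hig.natDegree_pos
  have hcardE : Fintype.card E = Fintype.card K ^ g.natDegree := by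
    rw [Module.card_fintype pb.basis, Fintype.card_fin]
    rfl
  have hmQ : m ∣ Fintype.card K ^ g.natDegree - 1 := by
    apply orderOf_dvd_of_pow_eq_one
    have h5 := FiniteField.pow_card_sub_one_eq_one α hα0
    rwa [hcardE] at h5
  have hle : t ≤ g.natDegree := by
    refine nt_le hQ2 hm0 hd0 (fun p hp hpm => hrad p hp (hpm.trans hmn)) ?_ hmQ
    refine hpar.imp_left ?_
    intro hodd
    rcases Nat.even_or_odd m with he | ho
    · exfalso
      have h6 : (2 : ℕ) ∣ n := dvd_trans he.two_dvd hmn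
      rw [Nat.odd_iff] at hodd
      omega
    · exact ho
  have hassoc : Associated g (X ^ t - C b) :=
    associated_of_dvd_of_natDegree_le hdvd2 hXtC
      (by rw [natDegree_X_pow_sub_C]; omega)
  exact ⟨t, b, ht0, hb0, eq_of_monic_of_associated hmg (monic_X_pow_sub_C b ht0.ne') hassoc⟩

/-- If `rad(n) ∣ q² - 1`, then every monic irreducible factor of `x^n - 1` over `F_q` is
either a binomial `x^t - a` with `a ∈ F_q^*`, or a trinomial
`x^{2t} - (a + a^q)x^t + a^{q+1}` with `a ∈ F_{q²} \ F_q`. -/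
theorem irreducible_factors_binomial_or_trinomial_general {F F2 : Type*}
    [Field F] [Fintype F] [Field F2] [Fintype F2] [Algebra F F2]
    (q : ℕ) (hq : q = Fintype.card F) (hq2 : Fintype.card F2 = q ^ 2)
    (n : ℕ) (hn : 0 < n)
    (h3 : (∏ p ∈ n.primeFactors, p) ∣ (q ^ 2 - 1)) :
    ∀ f : Polynomial F, f.Monic → Irreducible f → f ∣ (X ^ n - 1 : Polynomial F) →
      (∃ (t : ℕ) (a : F), 0 < t ∧ a ≠ 0 ∧ f = X ^ t - C a) ∨
      (∃ (t : ℕ) (a : F2), 0 < t ∧ a ∉ Set.range (algebraMap F F2) ∧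
          f.map (algebraMap F F2) =
            X ^ (2 * t) - C (a + a ^ q) * X ^ t + C (a ^ (q + 1))) := by
  intro f hmf hif hfd
  have hQ : 2 ≤ q := by rw [hq]; exact Fintype.one_lt_card
  have hrad : ∀ p : ℕ, p.Prime → p ∣ n → p ∣ q ^ 2 - 1 := by
    intro p hp hpn
    exact dvd_trans (Finset.dvd_prod_of_mem _ (Nat.mem_primeFactors.mpr ⟨hp, hpn, hn.ne'⟩)) h3
  have hpar : Odd n ∨ 4 ∣ q ^ 2 - 1 := by
    rcases Nat.even_or_odd q with hqe | hqo
    · left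
      rcases Nat.even_or_odd n with hne | hno
      · exfalso
        have h2 : (2 : ℕ) ∣ q ^ 2 - 1 := hrad 2 Nat.prime_two hne.two_dvd
        obtain ⟨c, hc⟩ := hqe
        obtain ⟨d, hd⟩ := h2
        have h4 : q * q = 4 * (c * c) := by rw [hc]; ring
        have h5 : 4 ≤ q * q := Nat.mul_le_mul hQ hQ
        rw [pow_two] at hd
        omega
      · exact hno
    · right
      obtain ⟨j, hj⟩ := hqo
      have h5 : q ^ 2 = 4 * (j * j + j) + 1 := by rw [hj]; ring
      omega
  have hinj : Function.Injective (algebraMap F F2) := (algebraMap F F2).injective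
  have hfmap_dvd : f.map (algebraMap F F2) ∣ (X ^ n - 1 : F2[X]) := by
    have h6 := Polynomial.map_dvd (algebraMap F F2) hfd
    simpa using h6
  have hfm : (f.map (algebraMap F F2)).Monic := hmf.map _
  have hfdeg : 0 < f.natDegree := hif.natDegree_pos
  have hfmdeg : 0 < (f.map (algebraMap F F2)).natDegree := by
    rwa [hmf.natDegree_map]
  obtain ⟨g, hgm, hgi, hgd⟩ := (f.map (algebraMap F F2)).exists_monic_irreducible_factor
    (Polynomial.not_isUnit_of_natDegree_pos _ hfmdeg)
  have hrad2 : ∀ p : ℕ, p.Prime → p ∣ n → p ∣ Fintype.card F2 - 1 := by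
    intro p hp hpn
    rw [hq2]
    exact hrad p hp hpn
  have hpar2 : Odd n ∨ 4 ∣ Fintype.card F2 - 1 := by rw [hq2]; exact hpar
  obtain ⟨t, a, ht0, ha0, hga⟩ := lemA hn hrad2 hpar2 hgm hgi (hgd.trans hfmap_dvd)
  -- the Frobenius x ↦ x ^ q on F2
  set p := ringChar F with hpdef
  haveI : CharP F p := ringChar.charP F
  haveI : CharP F2 p := charP_of_injective_algebraMap hinj p
  obtain ⟨k, hpk, hqk⟩ := FiniteField.card F p
  haveI := Fact.mk hpk
  haveI : ExpChar F2 p := ExpChar.prime hpk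
  set φ : F2 →+* F2 := iterateFrobenius F2 p k with hφdef
  have hφ : ∀ x : F2, φ x = x ^ q := by
    intro x
    rw [hφdef, iterateFrobenius_def, ← hqk, ← hq]
  have hcomp : φ.comp (algebraMap F F2) = algebraMap F F2 := by
    refine RingHom.ext fun x => ?_
    rw [RingHom.comp_apply, hφ, ← map_pow, hq, FiniteField.pow_card]
  have hmapφ : (f.map (algebraMap F F2)).map φ = f.map (algebraMap F F2) := by
    rw [Polynomial.map_map, hcomp]
  have hrangeiff : ∀ x : F2, x ∈ Set.range (algebraMap F F2) ↔ x ^ q = x := by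
    intro x
    rw [hq]
    exact mem_range_iff_pow_card x
  have hq2pow : ∀ x : F2, (x ^ q) ^ q = x := by
    intro x
    rw [← pow_mul, ← sq, ← hq2]
    exact FiniteField.pow_card x
  by_cases hcase : a ∈ Set.range (algebraMap F F2)
  · -- binomial case
    obtain ⟨b, hb⟩ := hcase
    left
    have hmapb : (X ^ t - C b : F[X]).map (algebraMap F F2) = X ^ t - C a := by
      simp [hb]
    have hdvdf : (X ^ t - C b : F[X]) ∣ f := by
      rw [← Polynomial.map_dvd_map (algebraMap F F2) hinj (monic_X_pow_sub_C b ht0.ne'),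
        hmapb, ← hga]
      exact hgd
    have hfeq : (X ^ t - C b : F[X]) = f :=
      eq_of_monic_dvd_irreducible (monic_X_pow_sub_C b ht0.ne') hmf hif hdvdf
        (Polynomial.not_isUnit_of_natDegree_pos _ (by rw [natDegree_X_pow_sub_C]; omega))
    refine ⟨t, b, ht0, fun h => ha0 ?_, hfeq.symm⟩
    rw [← hb, h, map_zero]
  · -- trinomial case
    right
    have haq : a ^ q ≠ a := fun h => hcase ((hrangeiff a).mpr h)
    have hgφ : g.map φ = X ^ t - C (a ^ q) := by
      rw [hga]
      simp [hφ]
    have hσdvd : g.map φ ∣ f.map (algebraMap F F2) := by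
      have h7 := Polynomial.map_dvd φ hgd
      rwa [hmapφ] at h7
    have hφbij : Function.Bijective φ :=
      ⟨φ.injective, Finite.injective_iff_surjective.mp φ.injective⟩
    have hσirr : Irreducible (g.map φ) := by
      have h8 : (RingEquiv.ofBijective φ hφbij : F2 →+* F2) = φ := rfl
      have h9 : g.map φ = Polynomial.mapEquiv (RingEquiv.ofBijective φ hφbij) g := by
        rw [Polynomial.mapEquiv_apply, h8]
      rw [h9]
      exact hgi.map (Polynomial.mapEquiv (RingEquiv.ofBijective φ hφbij))
    have hgne : g.map φ ≠ g := by
      intro h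
      rw [hgφ, hga] at h
      have h10 := congrArg (fun P : F2[X] => P.coeff 0) h
      simp only [coeff_sub, coeff_X_pow, coeff_C] at h10
      apply haq
      have h11 : (0 : ℕ) ≠ t := ht0.ne
      simpa [if_neg h11.symm] using h10
    have hnotdvd : ¬ g ∣ g.map φ := by
      intro hdv
      exact hgne (eq_of_monic_dvd_irreducible hgm (hgm.map φ) hσirr hdv hgi.not_isUnit).symm
    have hcop : IsCoprime g (g.map φ) := hgi.coprime_iff_not_dvd.mpr hnotdvd
    have hproddvd : g * g.map φ ∣ f.map (algebraMap F F2) := hcop.mul_dvd hgd hσdvd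
    set P : F2[X] := X ^ (2 * t) - C (a + a ^ q) * X ^ t + C (a ^ (q + 1)) with hP
    have hPfact : P = g * g.map φ := by
      rw [hP, hgφ, hga]
      have h12 : a ^ (q + 1) = a * a ^ q := by rw [pow_succ']
      rw [h12, C_add, C_mul, two_mul, pow_add]
      ring
    have hPmonic : P.Monic := by
      rw [hPfact]
      exact hgm.mul (hgm.map φ)
    have h1q : (a + a ^ q) ^ q = a + a ^ q := by
      rw [← hφ, map_add, hφ, hφ, hq2pow, add_comm]
    have h2q : (a ^ (q + 1)) ^ q = a ^ (q + 1) := by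
      rw [← hφ, map_pow, hφ]
      calc (a ^ q) ^ (q + 1) = (a ^ q) ^ q * a ^ q := by rw [pow_succ]
      _ = a * a ^ q := by rw [hq2pow]
      _ = a ^ (q + 1) := (pow_succ' a q).symm
    have hPφ : P.map φ = P := by
      rw [hP]
      simp only [Polynomial.map_add, Polynomial.map_sub, Polynomial.map_mul,
        Polynomial.map_pow, map_X, map_C, hφ, h1q, h2q]
    have hPlift : P ∈ Polynomial.lifts (algebraMap F F2) := by
      rw [Polynomial.lifts_iff_coeff_lifts]
      intro i
      rw [hrangeiff]
      calc (P.coeff i) ^ q = φ (P.coeff i) := (hφ _).symm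
      _ = (P.map φ).coeff i := (coeff_map φ i).symm
      _ = P.coeff i := by rw [hPφ]
    have hPdvd : P ∣ f.map (algebraMap F F2) := by
      rw [hPfact]
      exact hproddvd
    obtain ⟨h, hhmap, hhdeg, hhmonic⟩ :=
      Polynomial.lifts_and_degree_eq_and_monic hPlift hPmonic
    have hhf : h ∣ f := by
      rw [← Polynomial.map_dvd_map (algebraMap F F2) hinj hhmonic, hhmap]
      exact hPdvd
    have hgdeg : g.natDegree = t := by rw [hga, natDegree_X_pow_sub_C]
    have hPdeg : 0 < P.natDegree := by
      rw [hPfact, natDegree_mul hgm.ne_zero (hgm.map φ).ne_zero]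
      omega
    have hhdeg0 : 0 < h.natDegree := by
      have h13 : (h.map (algebraMap F F2)).natDegree = h.natDegree := hhmonic.natDegree_map _
      rw [hhmap] at h13
      omega
    have hhf_eq : h = f :=
      eq_of_monic_dvd_irreducible hhmonic hmf hif hhf
        (Polynomial.not_isUnit_of_natDegree_pos _ hhdeg0)
    refine ⟨t, a, ht0, hcase, ?_⟩
    rw [← hhf_eq, hhmap]
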